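/- Let d ≥ 2 be an even integer and Θ a d-small symbol with bipartition λ¹.λ² and charge (σ₁,σ₂), with defining intervals whose right region lies in row 1 and whose middle region has cardinality 0. Let b¹ be an addable or removable box of λ¹ and b² an addable or removable box of λ², and suppose the charged contents of b¹ and b² (with respect to t = (σ₁, σ₂ + d/2)) are congruent modulo d. Then the charged contents of b¹ and b² are equal. -/

import Mathlib

open scoped Classical

/-- A β-set: a set of integers containing all sufficiently small integers
and no sufficiently large ones. -/
def IsBetaSet (X : Set ℤ) : Prop :=
  (∃ c : ℤ, ∀ z : ℤ, z < c → z ∈ X) ∧ (∃ C : ℤ, ∀ z : ℤ, C ≤ z → z ∉ X)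

/-- `topB X = max X`. -/
noncomputable def topB (X : Set ℤ) : ℤ := sSup X

/-- `botB X = max {z | every integer < z lies in X}`. -/
noncomputable def botB (X : Set ℤ) : ℤ := sSup {z : ℤ | ∀ w : ℤ, w < z → w ∈ X}

/-- The charge `s(X)` of a β-set `X`, computed with the cutoff `c = botB X`. -/
noncomputable def chargeB (X : Set ℤ) : ℤ :=
  ((X ∩ Set.Ici (botB X)).ncard : ℤ) + botB X - 1

/-- `elemSeq X j` is the `(j+1)`-st largest element of the β-set `X`. -/
noncomputable def elemSeq (X : Set ℤ) : ℕ → ℤ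
  | 0 => sSup X
  | n + 1 => sSup (X ∩ Set.Iio (elemSeq X n))

/-- The partition `λ(X)` of a β-set `X`, `0`-indexed: `partB X j = λ_{j+1}`,
recovered from `x_j = s(X) + λ_j - j + 1` where `x_j` is the `j`-th largest element. -/
noncomputable def partB (X : Set ℤ) (j : ℕ) : ℕ :=
  (elemSeq X j - chargeB X + j).toNat

/-- The size `|λ(X)|` of the partition of a β-set `X`. -/
noncomputable def sizeB (X : Set ℤ) : ℕ := ∑ᶠ j : ℕ, partB X j

/-- A partition, encoded as a weakly decreasing eventually zero function (0-indexed). -/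
def IsPartition (μ : ℕ → ℕ) : Prop :=
  (∀ j, μ (j + 1) ≤ μ j) ∧ ∃ N, ∀ j, N ≤ j → μ j = 0

/-- The β-set `{s + λ_j - j + 1 : j ≥ 1}` of the partition `μ` with charge `s`. -/
def betaOf (μ : ℕ → ℕ) (s : ℤ) : Set ℤ :=
  {x : ℤ | ∃ j : ℕ, x = s + (μ j : ℤ) - (j : ℤ)}

/-- The symbol `Θ = (X₁, X₂)` is `d`-small with defining intervals
`I₁ = [a₁,b₁]` and `I₂ = [a₂,b₂]`. -/
structure IsDSmallWith (d : ℤ) (X₁ X₂ : Set ℤ) (a₁ b₁ a₂ b₂ : ℤ) : Prop where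
  len₁ : b₁ - a₁ = d / 2 - 1
  len₂ : b₂ - a₂ = d / 2 - 1
  bot₁ : a₁ ≤ botB X₁
  bot₂ : a₂ ≤ botB X₂
  top₁ : topB X₁ ≤ b₁
  top₂ : topB X₂ ≤ b₂
  cong : d ∣ b₂ - (b₁ + d / 2)

/-- The symbol `Θ = (X₁, X₂)` is `d`-small: it admits some pair of defining intervals. -/
def IsDSmall (d : ℤ) (X₁ X₂ : Set ℤ) : Prop :=
  ∃ a₁ b₁ a₂ b₂ : ℤ, IsDSmallWith d X₁ X₂ a₁ b₁ a₂ b₂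

/-- The row (`1` or `2`) containing the right region. -/
def rightRow (b₁ b₂ : ℤ) : ℕ := if b₁ < b₂ then 2 else 1

/-- The row, as a β-set, containing the right region. -/
def rightSet (X₁ X₂ : Set ℤ) (b₁ b₂ : ℤ) : Set ℤ := if b₁ < b₂ then X₂ else X₁

/-- The row, as a β-set, containing the left region. -/
def leftSet (X₁ X₂ : Set ℤ) (b₁ b₂ : ℤ) : Set ℤ := if b₁ < b₂ then X₁ else X₂

/-- The cardinality `kd` of the middle region. -/
def middleLen (d b₁ b₂ : ℤ) : ℤ := |b₂ - b₁| - d / 2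

/-- The alphabet `{∧, ∨, ×, ∘}` of up-down diagrams: `up = ∧`, `dn = ∨`,
`cross = ×`, `circ = ∘`. -/
inductive UD : Type
  | up
  | dn
  | cross
  | circ
deriving DecidableEq

/-- The up-down diagram `w_ud(Θ)` of a `d`-small symbol with defining intervals:
`wud d X₁ X₂ b₁ b₂ i` is the letter `w_i` for `1 ≤ i ≤ d/2`.  Here the right
region is `[m+1, m+d/2]` with `m = max b₁ b₂ - d/2`, `β_i = m + i`, and
`β_i - kd - d/2 = β_i - |b₂ - b₁|`. -/
noncomputable def wud (d : ℤ) (X₁ X₂ : Set ℤ) (b₁ b₂ : ℤ) (i : ℤ) : UD :=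
  if (max b₁ b₂ - d / 2 + i) ∈ rightSet X₁ X₂ b₁ b₂ then
    if (max b₁ b₂ - d / 2 + i) - |b₂ - b₁| ∈ leftSet X₁ X₂ b₁ b₂ then UD.cross else UD.up
  else
    if (max b₁ b₂ - d / 2 + i) - |b₂ - b₁| ∈ leftSet X₁ X₂ b₁ b₂ then UD.dn else UD.circ

/-- Removing an `e`-cohook in row `1` (the rows get interchanged afterwards). -/
def RemoveCohookRow1 (e : ℤ) (Θ Θ' : Set ℤ × Set ℤ) : Prop :=
  ∃ x : ℤ, x ∈ Θ.1 ∧ x - e ∉ Θ.2 ∧ Θ' = (Θ.2 ∪ {x - e}, Θ.1 \ {x})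

/-- Removing an `e`-cohook in row `2` (the rows get interchanged afterwards). -/
def RemoveCohookRow2 (e : ℤ) (Θ Θ' : Set ℤ × Set ℤ) : Prop :=
  ∃ x : ℤ, x ∈ Θ.2 ∧ x - e ∉ Θ.1 ∧ Θ' = (Θ.2 \ {x}, Θ.1 ∪ {x - e})

/-- Removing an `e`-cohook. -/
def RemoveCohook (e : ℤ) (Θ Θ' : Set ℤ × Set ℤ) : Prop :=
  RemoveCohookRow1 e Θ Θ' ∨ RemoveCohookRow2 e Θ Θ'

/-- The symbol `Θ` has an `e`-cohook. -/
def HasCohook (e : ℤ) (Θ : Set ℤ × Set ℤ) : Prop :=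
  (∃ x : ℤ, x ∈ Θ.1 ∧ x - e ∉ Θ.2) ∨ (∃ x : ℤ, x ∈ Θ.2 ∧ x - e ∉ Θ.1)

/-- `C` is an `e`-cocore of `Θ`: a symbol with no `e`-cohooks obtained from `Θ`
by a finite sequence of `e`-cohook removals. -/
def IsCocoreOf (e : ℤ) (Θ C : Set ℤ × Set ℤ) : Prop :=
  Relation.ReflTransGen (RemoveCohook e) Θ C ∧ ¬ HasCohook e C

/-- The `n`-fold composition of a relation. -/
def RelPow {α : Type*} (R : α → α → Prop) : ℕ → α → α → Prop
  | 0 => Eq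
  | n + 1 => fun a c => ∃ b, R a b ∧ RelPow R n b c

/-- `(a, b)` (row `a`, column `b`, both `1`-indexed) is a box of the partition `μ`
(`μ` is `0`-indexed, so `μ (a-1)` is the `a`-th part `λ_a`). -/
def IsBox (μ : ℕ → ℕ) (a b : ℕ) : Prop := 1 ≤ a ∧ 1 ≤ b ∧ b ≤ μ (a - 1)

/-- `(a, b)` is an addable box of `μ`: adjoining it yields a partition. -/
def IsAddableBox (μ : ℕ → ℕ) (a b : ℕ) : Prop :=
  1 ≤ a ∧ b = μ (a - 1) + 1 ∧ (a = 1 ∨ b ≤ μ (a - 2))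

/-- `(a, b)` is a removable box of `μ`: deleting it yields a partition. -/
def IsRemovableBox (μ : ℕ → ℕ) (a b : ℕ) : Prop :=
  1 ≤ a ∧ b = μ (a - 1) ∧ 1 ≤ b ∧ μ a < b

/-- The charged content `t + b - a` of the box in row `a` and column `b`,
with respect to the charge `t`. -/
def chCont (t : ℤ) (a b : ℕ) : ℤ := t + (b : ℤ) - (a : ℤ)

/-- Selecting the component `j ∈ {1, 2}` of a bipartition. -/
def compPart (μ₁ μ₂ : ℕ → ℕ) (j : ℕ) : ℕ → ℕ := if j = 1 then μ₁ else μ₂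

/-- Selecting the component `j ∈ {1, 2}` of a pair of charges. -/
def compT (t₁ t₂ : ℤ) (j : ℕ) : ℤ := if j = 1 then t₁ else t₂

/-- The box `(a, b)` in component `j` is a good removable `i`-box of the
bipartition `(μ₁, μ₂)` with charges `(t₁, t₂)`, where `r` is the row containing
the right region: it is a removable box of charged content `≡ i (mod d)` and
there is no addable box `A` of either component with charged content `≡ i (mod d)`
such that either `A` has strictly larger charged content, or `A` has equal
charged content and lies in component `r`. -/
def IsGoodRemovableBox (d : ℤ) (μ₁ μ₂ : ℕ → ℕ) (t₁ t₂ : ℤ) (r : ℕ) (i : ℤ)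
    (j a b : ℕ) : Prop :=
  (j = 1 ∨ j = 2) ∧ IsRemovableBox (compPart μ₁ μ₂ j) a b ∧
    d ∣ chCont (compT t₁ t₂ j) a b - i ∧
    ∀ j' a' b' : ℕ, (j' = 1 ∨ j' = 2) → IsAddableBox (compPart μ₁ μ₂ j') a' b' →
      d ∣ chCont (compT t₁ t₂ j') a' b' - i →
      ¬ (chCont (compT t₁ t₂ j) a b < chCont (compT t₁ t₂ j') a' b' ∨
        (chCont (compT t₁ t₂ j') a' b' = chCont (compT t₁ t₂ j) a b ∧ j' = r))

/-- The position of a letter in the order `× < ∧ < ∨ < ∘`. -/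
def udIdx : UD → ℕ
  | UD.cross => 0
  | UD.up => 1
  | UD.dn => 2
  | UD.circ => 3

/-- The word `w₁ ⋯ w_{d/2}` reads `×^α ∧^w ∨^h ∘^β`: all `×`'s first, then all
`∧`'s, then all `∨`'s, then all `∘`'s. -/
def SortedUD (d : ℤ) (w : ℤ → UD) : Prop :=
  ∀ i j : ℤ, 1 ≤ i → i ≤ j → j ≤ d / 2 → udIdx (w i) ≤ udIdx (w j)

/-- The number of occurrences of the letter `u` in the word `w₁ ⋯ w_{d/2}`. -/
noncomputable def countUD (d : ℤ) (w : ℤ → UD) (u : UD) : ℕ :=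
  ((Finset.Icc (1 : ℤ) (d / 2)).filter fun i => w i = u).card

/-- `w'` is obtained from `w` by permuting the letters `∧` and `∨` among the
positions carrying `∧` or `∨`, leaving every `×` and `∘` in place. -/
def PermUpDn (d : ℤ) (w w' : ℤ → UD) : Prop :=
  (∀ i : ℤ, 1 ≤ i → i ≤ d / 2 →
    ((w' i = UD.cross ↔ w i = UD.cross) ∧ (w' i = UD.circ ↔ w i = UD.circ))) ∧
  countUD d w' UD.up = countUD d w UD.up

/-- Replace every letter `∧` by `∨`, leaving the other letters unchanged. -/
def replaceUp : UD → UD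
  | UD.up => UD.dn
  | u => u

/-! The charged content `c` of an addable or removable box of `λ(X)` marks a boundary of the
β-set `X`: exactly one of `c`, `c + 1` lies in `X`. Hence `c` lies in `[bot X - 1, top X]`, which
for a `d`-small symbol is contained in `[b_i - d/2, b_i]`. When the middle region is empty,
`b₁ = b₂ + d/2`, so after the shift by `d/2` both contents lie in the same interval of length
`d/2 < d`, and congruence modulo `d` forces equality. -/

lemma ncard_Ico_int (a b : ℤ) : (Set.Ico a b).ncard = (b - a).toNat := by
  rw [← Finset.coe_Ico, Set.ncard_coe_finset, Int.card_Ico]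

namespace IsBetaSet

variable {X : Set ℤ}

lemma bddAbove (hX : IsBetaSet X) : BddAbove X := by
  obtain ⟨_, C, hC⟩ := hX
  exact ⟨C, fun x hx => not_lt.mp fun h => hC x h.le hx⟩

lemma inter_Ici_finite (hX : IsBetaSet X) (c : ℤ) : (X ∩ Set.Ici c).Finite :=
  (Set.finite_Icc c hX.bddAbove.choose).subset fun _ ⟨hx, hc⟩ => ⟨hc, hX.bddAbove.choose_spec hx⟩

lemma mem_of_lt_botB (hX : IsBetaSet X) {w : ℤ} (hw : w < botB X) : w ∈ X := by
  obtain ⟨⟨c, hc⟩, C, hC⟩ := hX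
  have hbot : botB X ∈ {z : ℤ | ∀ w : ℤ, w < z → w ∈ X} :=
    Int.csSup_mem ⟨c, hc⟩ ⟨C, fun z hz => not_lt.mp fun h => hC C le_rfl (hz C h)⟩
  exact hbot w hw

lemma botB_le_of_notMem (hX : IsBetaSet X) {z : ℤ} (hz : z ∉ X) : botB X ≤ z :=
  not_lt.mp fun h => hz (hX.mem_of_lt_botB h)

lemma le_topB_of_mem (hX : IsBetaSet X) {x : ℤ} (hx : x ∈ X) : x ≤ topB X :=
  le_csSup hX.bddAbove hx

lemma chargeB_le_ncard_inter_Ici_add (hX : IsBetaSet X) (c : ℤ) :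
    chargeB X ≤ (X ∩ Set.Ici c).ncard + c - 1 := by
  rw [chargeB]
  set β := botB X
  rcases le_or_gt β c with hβc | hcβ
  · have hsub : X ∩ Set.Ici β ⊆ (X ∩ Set.Ici c) ∪ Set.Ico β c := fun x ⟨hx, hβx⟩ =>
      (le_or_gt c x).imp (fun hcx => ⟨hx, hcx⟩) fun hxc => ⟨hβx, hxc⟩
    have hle := (Set.ncard_le_ncard hsub ((hX.inter_Ici_finite c).union (Set.finite_Ico β c))).trans
      (Set.ncard_union_le _ _)
    rw [ncard_Ico_int] at hle
    omega
  · have hsub : (X ∩ Set.Ici β) ∪ Set.Ico c β ⊆ X ∩ Set.Ici c := by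
      rintro x (⟨hx, hβx⟩ | ⟨hcx, hxβ⟩)
      · exact ⟨hx, hcβ.le.trans hβx⟩
      · exact ⟨hX.mem_of_lt_botB hxβ, hcx⟩
    have hdisj : Disjoint (X ∩ Set.Ici β) (Set.Ico c β) :=
      Set.disjoint_left.mpr fun x ⟨_, hβx⟩ ⟨_, hxβ⟩ => (not_le.mpr hxβ) hβx
    have hle := Set.ncard_le_ncard hsub (hX.inter_Ici_finite c)
    rw [Set.ncard_union_eq hdisj (hX.inter_Ici_finite β) (Set.finite_Ico c β),
      ncard_Ico_int] at hle
    omega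

lemma elemSeq_succ_mem (hX : IsBetaSet X) (n : ℕ) :
    elemSeq X (n + 1) ∈ X ∩ Set.Iio (elemSeq X n) := by
  have hlow : min (botB X) (elemSeq X n) - 1 ∈ X ∩ Set.Iio (elemSeq X n) :=
    ⟨hX.mem_of_lt_botB (by omega), by simp only [Set.mem_Iio]; omega⟩
  exact Int.csSup_mem ⟨_, hlow⟩ (hX.bddAbove.mono Set.inter_subset_left)

lemma elemSeq_mem (hX : IsBetaSet X) : ∀ n : ℕ, elemSeq X n ∈ X
  | 0 => Int.csSup_mem ⟨_, hX.mem_of_lt_botB (sub_one_lt _)⟩ hX.bddAbove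
  | n + 1 => (hX.elemSeq_succ_mem n).1

lemma elemSeq_strictAnti (hX : IsBetaSet X) : StrictAnti (elemSeq X) :=
  strictAnti_nat_of_succ_lt fun n => (hX.elemSeq_succ_mem n).2

lemma le_elemSeq_succ (hX : IsBetaSet X) {x : ℤ} {n : ℕ} (hx : x ∈ X)
    (h : x < elemSeq X n) : x ≤ elemSeq X (n + 1) :=
  le_csSup (hX.bddAbove.mono Set.inter_subset_left) ⟨hx, h⟩

lemma inter_Ici_elemSeq_zero (hX : IsBetaSet X) : X ∩ Set.Ici (elemSeq X 0) = {elemSeq X 0} := by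
  ext x
  refine ⟨fun ⟨hx, hge⟩ => le_antisymm (le_csSup hX.bddAbove hx) hge, ?_⟩
  rintro rfl
  exact ⟨hX.elemSeq_mem 0, Set.self_mem_Ici⟩

lemma inter_Ici_elemSeq_succ (hX : IsBetaSet X) (j : ℕ) :
    X ∩ Set.Ici (elemSeq X (j + 1)) = insert (elemSeq X (j + 1)) (X ∩ Set.Ici (elemSeq X j)) := by
  ext x
  constructor
  · rintro ⟨hx, hge⟩
    rcases lt_or_ge x (elemSeq X j) with h | h
    · exact Or.inl (le_antisymm (hX.le_elemSeq_succ hx h) hge)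
    · exact Or.inr ⟨hx, h⟩
  rintro (rfl | ⟨hx, hge⟩)
  · exact ⟨hX.elemSeq_mem _, Set.self_mem_Ici⟩
  · exact ⟨hx, (hX.elemSeq_strictAnti (Nat.lt_succ_self j)).le.trans hge⟩

lemma ncard_inter_Ici_elemSeq (hX : IsBetaSet X) :
    ∀ j : ℕ, (X ∩ Set.Ici (elemSeq X j)).ncard = j + 1
  | 0 => by rw [hX.inter_Ici_elemSeq_zero, Set.ncard_singleton]
  | j + 1 => by
    have hnew : elemSeq X (j + 1) ∉ X ∩ Set.Ici (elemSeq X j) := fun ⟨_, hge⟩ =>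
      not_le.mpr (hX.elemSeq_strictAnti (Nat.lt_succ_self j)) hge
    rw [hX.inter_Ici_elemSeq_succ, Set.ncard_insert_of_notMem hnew (hX.inter_Ici_finite _),
      ncard_inter_Ici_elemSeq hX j]

-- `partB` is defined through `Int.toNat`; the charge bound shows that nothing is truncated.
lemma elemSeq_eq (hX : IsBetaSet X) (j : ℕ) : elemSeq X j = chargeB X + partB X j - j := by
  have h := hX.chargeB_le_ncard_inter_Ici_add (elemSeq X j)
  rw [hX.ncard_inter_Ici_elemSeq] at h
  rw [partB]
  omega

lemma notMem_of_elemSeq_succ_lt (hX : IsBetaSet X) {x : ℤ} {j : ℕ} (h₁ : elemSeq X (j + 1) < x)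
    (h₂ : x < elemSeq X j) : x ∉ X :=
  fun hx => not_le.mpr h₁ (hX.le_elemSeq_succ hx h₂)

lemma chCont_of_isAddableBox (hX : IsBetaSet X) {A B : ℕ} (h : IsAddableBox (partB X) A B) :
    chCont (chargeB X) A B ∈ X ∧ chCont (chargeB X) A B + 1 ∉ X := by
  obtain ⟨hA, hB, hprev⟩ := h
  obtain ⟨j, rfl⟩ : ∃ j, A = j + 1 := ⟨A - 1, by omega⟩
  rw [Nat.add_sub_cancel] at hB
  have hc : chCont (chargeB X) (j + 1) B = elemSeq X j := by
    rw [chCont, hX.elemSeq_eq, hB]; push_cast; ring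
  rw [hc]
  refine ⟨hX.elemSeq_mem j, ?_⟩
  rcases j with _ | j
  · exact fun hx => not_le.mpr (lt_add_one _) (le_csSup hX.bddAbove hx)
  · have hgap : elemSeq X (j + 1) + 1 < elemSeq X j := by
      have hle : B ≤ partB X j := by simpa using hprev.resolve_left (by omega)
      have := hX.elemSeq_eq j
      have := hX.elemSeq_eq (j + 1)
      omega
    exact hX.notMem_of_elemSeq_succ_lt (lt_add_one _) hgap

lemma chCont_of_isRemovableBox (hX : IsBetaSet X) {A B : ℕ} (h : IsRemovableBox (partB X) A B) :
    chCont (chargeB X) A B ∉ X ∧ chCont (chargeB X) A B + 1 ∈ X := by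
  obtain ⟨hA, hB, -, hnext⟩ := h
  obtain ⟨j, rfl⟩ : ∃ j, A = j + 1 := ⟨A - 1, by omega⟩
  rw [Nat.add_sub_cancel] at hB
  have hc : chCont (chargeB X) (j + 1) B = elemSeq X j - 1 := by
    rw [chCont, hX.elemSeq_eq, hB]; push_cast; ring
  rw [hc, sub_add_cancel]
  refine ⟨hX.notMem_of_elemSeq_succ_lt ?_ (sub_one_lt _), hX.elemSeq_mem j⟩
  have := hX.elemSeq_eq j
  have := hX.elemSeq_eq (j + 1)
  omega

lemma chCont_mem_Icc (hX : IsBetaSet X) {A B : ℕ}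
    (h : IsAddableBox (partB X) A B ∨ IsRemovableBox (partB X) A B) :
    chCont (chargeB X) A B ∈ Set.Icc (botB X - 1) (topB X) := by
  rcases h with h | h
  · obtain ⟨hin, hout⟩ := hX.chCont_of_isAddableBox h
    exact ⟨by linarith [hX.botB_le_of_notMem hout], hX.le_topB_of_mem hin⟩
  · obtain ⟨hout, hin⟩ := hX.chCont_of_isRemovableBox h
    exact ⟨by linarith [hX.botB_le_of_notMem hout], by linarith [hX.le_topB_of_mem hin]⟩

end IsBetaSet

theorem stmt7_general (d : ℤ)
    (X₁ X₂ : Set ℤ) (hX₁ : IsBetaSet X₁) (hX₂ : IsBetaSet X₂)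
    (a₁ b₁ a₂ b₂ : ℤ) (hsm : IsDSmallWith d X₁ X₂ a₁ b₁ a₂ b₂)
    (hrow : b₂ < b₁) (hmid : middleLen d b₁ b₂ = 0)
    (A₁ B₁ A₂ B₂ : ℕ)
    (hbx₁ : IsAddableBox (partB X₁) A₁ B₁ ∨ IsRemovableBox (partB X₁) A₁ B₁)
    (hbx₂ : IsAddableBox (partB X₂) A₂ B₂ ∨ IsRemovableBox (partB X₂) A₂ B₂)
    (hcong : d ∣ chCont (chargeB X₁) A₁ B₁ - chCont (chargeB X₂ + d / 2) A₂ B₂) :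
    chCont (chargeB X₁) A₁ B₁ = chCont (chargeB X₂ + d / 2) A₂ B₂ := by
  have hb : b₁ - b₂ = d / 2 := by
    rwa [middleLen, abs_of_neg (sub_neg.mpr hrow), neg_sub, sub_eq_zero] at hmid
  have hshift : chCont (chargeB X₂ + d / 2) A₂ B₂ = chCont (chargeB X₂) A₂ B₂ + d / 2 := by
    simp only [chCont]; ring
  obtain ⟨hlo₁, hhi₁⟩ := hX₁.chCont_mem_Icc hbx₁
  obtain ⟨hlo₂, hhi₂⟩ := hX₂.chCont_mem_Icc hbx₂
  obtain ⟨hlen₁, hlen₂, hbot₁, hbot₂, htop₁, htop₂, -⟩ := hsm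
  refine sub_eq_zero.mp (Int.eq_zero_of_abs_lt_dvd hcong (abs_lt.mpr ⟨?_, ?_⟩)) <;> omega

/-- For a `d`-small symbol whose right region lies in row `1`
(`b₂ < b₁`) and whose middle region has cardinality `0`, given addable-or-removable
boxes `(A₁,B₁)` of `λ¹` and `(A₂,B₂)` of `λ²` whose charged contents (w.r.t.
`t = (σ₁, σ₂ + d/2)`) are congruent modulo `d`, the two charged contents are equal. -/
theorem stmt7 (d : ℤ) (hd : 2 ≤ d) (hdE : Even d)
    (X₁ X₂ : Set ℤ) (hX₁ : IsBetaSet X₁) (hX₂ : IsBetaSet X₂)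
    (a₁ b₁ a₂ b₂ : ℤ) (hsm : IsDSmallWith d X₁ X₂ a₁ b₁ a₂ b₂)
    (hrow : b₂ < b₁) (hmid : middleLen d b₁ b₂ = 0)
    (A₁ B₁ A₂ B₂ : ℕ)
    (hbx₁ : IsAddableBox (partB X₁) A₁ B₁ ∨ IsRemovableBox (partB X₁) A₁ B₁)
    (hbx₂ : IsAddableBox (partB X₂) A₂ B₂ ∨ IsRemovableBox (partB X₂) A₂ B₂)
    (hcong : d ∣ chCont (chargeB X₁) A₁ B₁ - chCont (chargeB X₂ + d / 2) A₂ B₂) :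
    chCont (chargeB X₁) A₁ B₁ = chCont (chargeB X₂ + d / 2) A₂ B₂ :=
  stmt7_general d X₁ X₂ hX₁ hX₂ a₁ b₁ a₂ b₂ hsm hrow hmid A₁ B₁ A₂ B₂ hbx₁ hbx₂ hcong
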